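/- Let H : ℂ → ℂ be strictly 1-Lipschitz and satisfy condition (∞), and let F, F_* be the associated homeomorphisms of ℂ. Then the maps G = −i·(F_* ∘ F⁻¹) and G* = i·(F ∘ F_*⁻¹), viewed as vector fields ℝ² → ℝ² under the identification ℂ ≅ ℝ², are continuous and strictly monotone. Moreover, if f : B₁ → ℂ is Lipschitz and solves the Beltrami equation f_{z̄} = H(f_z) a.e. in the unit disc B₁, then u = Re f is a weak solution of div G((1/2)∇u) = 0 in B₁ and v = Im f is a weak solution of div G*((1/2)∇v) = 0 in B₁. -/

import Mathlib

open Filter Metric MeasureTheory Topology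

noncomputable section

local notation "⟪" x ", " y "⟫" => @inner ℝ ℂ _ x y

/-- A vector field on ℝ² ≅ ℂ is strictly monotone. -/
def StrictlyMonotoneField (G : ℂ → ℂ) : Prop :=
  ∀ ξ ζ : ℂ, ξ ≠ ζ → 0 < ⟪G ξ - G ζ, ξ - ζ⟫

/-- Strongly monotone vector field. -/
def StronglyMonotoneField (G : ℂ → ℂ) : Prop :=
  ∃ C > 0, ∀ ξ ζ : ℂ, ‖ξ - ζ‖ ^ 2 + ‖G ξ - G ζ‖ ^ 2 ≤ C * ⟪G ξ - G ζ, ξ - ζ⟫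

/-- liminf as ζ → 0 of ⟨G(ξ+ζ)−G(ξ), ζ⟩/|ζ|², valued in EReal. -/
def liminfD (G : ℂ → ℂ) (ξ : ℂ) : EReal :=
  liminf (fun ζ : ℂ => ((⟪G (ξ + ζ) - G ξ, ζ⟫ / ‖ζ‖ ^ 2 : ℝ) : EReal)) (𝓝[≠] 0)

/-- liminf as ζ → 0 of ⟨G(ξ+ζ)−G(ξ), ζ⟩/|G(ξ+ζ)−G(ξ)|², valued in EReal. -/
def liminfS (G : ℂ → ℂ) (ξ : ℂ) : EReal :=
  liminf (fun ζ : ℂ =>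
    ((⟪G (ξ + ζ) - G ξ, ζ⟫ / ‖G (ξ + ζ) - G ξ‖ ^ 2 : ℝ) : EReal)) (𝓝[≠] 0)

/-- limsup as ζ → 0 of ⟨G(ξ+ζ)−G(ξ), ζ⟩/|ζ|², valued in EReal. -/
def limsupD (G : ℂ → ℂ) (ξ : ℂ) : EReal :=
  limsup (fun ζ : ℂ => ((⟪G (ξ + ζ) - G ξ, ζ⟫ / ‖ζ‖ ^ 2 : ℝ) : EReal)) (𝓝[≠] 0)

/-- The set D(G) where ellipticity degenerates from below. -/
def Dset (G : ℂ → ℂ) : Set ℂ :=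
  ⋂ lam > (0:ℝ), closure {ξ : ℂ | liminfD G ξ ≤ (lam : EReal)}

/-- The set S(G) where ellipticity degenerates from above. -/
def Sset (G : ℂ → ℂ) : Set ℂ :=
  ⋂ Lam > (0:ℝ), closure {ξ : ℂ | liminfS G ξ ≤ ((1 / Lam : ℝ) : EReal)}

/-- The set S̃(G). -/
def StildeSet (G : ℂ → ℂ) : Set ℂ :=
  ⋂ Lam > (0:ℝ), closure {ξ : ℂ | (Lam : EReal) ≤ limsupD G ξ}

/-- The open set O_λ(G). -/
def Oset (G : ℂ → ℂ) (lam : ℝ) : Set ℂ :=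
  interior {ξ : ℂ | (lam : EReal) ≤ liminfD G ξ}

/-- The open set V_Λ(G). -/
def Vset (G : ℂ → ℂ) (Lam : ℝ) : Set ℂ :=
  interior {ξ : ℂ | ((1 / Lam : ℝ) : EReal) ≤ liminfS G ξ}

/-- Modulus of monotony. -/
def omegaG (G : ℂ → ℂ) (t : ℝ) : ℝ :=
  sInf {a : ℝ | ∃ ξ ζ : ℂ, t < ‖ξ - ζ‖ ∧ a = ⟪G ξ - G ζ, ξ - ζ⟫}

/-- Divergence of a planar vector field. -/
def pdiv (w : ℂ → ℂ) (x : ℂ) : ℝ :=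
  (fderiv ℝ w x 1).re + (fderiv ℝ w x Complex.I).im

/-- u is a (pointwise) smooth solution of div G(∇u) = 0 in B₁. -/
def IsSmoothSol (G : ℂ → ℂ) (u : ℂ → ℝ) : Prop :=
  ContDiffOn ℝ (⊤ : ℕ∞) u (ball 0 1) ∧
    ∀ x ∈ ball (0:ℂ) 1, pdiv (fun y => G (gradient u y)) x = 0

/-- u is a weak solution of div G(∇u) = 0 in B₁. -/
def IsWeakSol (G : ℂ → ℂ) (u : ℂ → ℝ) : Prop :=
  ∀ φ : ℂ → ℝ, ContDiff ℝ (⊤ : ℕ∞) φ → HasCompactSupport φ → tsupport φ ⊆ ball 0 1 →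
    ∫ x in ball (0:ℂ) 1, ⟪G (gradient u x), gradient φ x⟫ = 0

/-- Wirtinger derivative f_z. -/
def wZ (f : ℂ → ℂ) (z : ℂ) : ℂ :=
  (fderiv ℝ f z 1 - Complex.I * fderiv ℝ f z Complex.I) / 2

/-- Wirtinger derivative f_z̄. -/
def wZbar (f : ℂ → ℂ) (z : ℂ) : ℂ :=
  (fderiv ℝ f z 1 + Complex.I * fderiv ℝ f z Complex.I) / 2

/-- L_H(ξ,ζ) = (H(ξ+ζ)−H(ξ))/conj(ζ). -/
def LH (H : ℂ → ℂ) (ξ ζ : ℂ) : ℂ := (H (ξ + ζ) - H ξ) / (starRingEnd ℂ ζ)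

/-- Γ₊ associated to H. -/
def GammaP (H : ℂ → ℂ) : Set ℂ :=
  ⋂ lam > (0:ℝ), closure {ξ : ℂ |
    liminf (fun ζ : ℂ =>
      (((1 - ‖LH H ξ ζ‖ ^ 2) / ‖1 + LH H ξ ζ‖ ^ 2 : ℝ) : EReal)) (𝓝[≠] 0) ≤ (lam : EReal)}

/-- Γ₋ associated to H. -/
def GammaM (H : ℂ → ℂ) : Set ℂ :=
  ⋂ lam > (0:ℝ), closure {ξ : ℂ |
    liminf (fun ζ : ℂ =>
      (((1 - ‖LH H ξ ζ‖ ^ 2) / ‖1 - LH H ξ ζ‖ ^ 2 : ℝ) : EReal)) (𝓝[≠] 0) ≤ (lam : EReal)}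

/-- H is strictly 1-Lipschitz. -/
def StrictlyOneLipschitz (H : ℂ → ℂ) : Prop :=
  ∀ ξ ζ : ℂ, ξ ≠ ζ → ‖H ξ - H ζ‖ < ‖ξ - ζ‖

/-- f is a Lipschitz solution of the Beltrami equation f_z̄ = H(f_z) in B₁. -/
def IsBeltramiSol (H : ℂ → ℂ) (f : ℂ → ℂ) : Prop :=
  (∃ K : NNReal, LipschitzOnWith K f (ball 0 1)) ∧
    ∀ᵐ z : ℂ, z ∈ ball (0:ℂ) 1 → wZbar f z = H (wZ f z)

/-- F(z) = (H(z)+conj z)/2. -/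
def Fmap (H : ℂ → ℂ) (z : ℂ) : ℂ := (H z + starRingEnd ℂ z) / 2

/-- F_*(z) = (H(z)−conj z)/(2i). -/
def Fstar (H : ℂ → ℂ) (z : ℂ) : ℂ := (H z - starRingEnd ℂ z) / (2 * Complex.I)

/-- Condition (∞). -/
def CondInfty (H : ℂ → ℂ) : Prop :=
  Tendsto (fun z : ℂ => ‖z‖ + ⟪starRingEnd ℂ (H z), z⟫ / ‖z‖) (Bornology.cobounded ℂ) atTop ∧
  Tendsto (fun z : ℂ => ‖z‖ - ⟪starRingEnd ℂ (H z), z⟫ / ‖z‖) (Bornology.cobounded ℂ) atTop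

/-- Squared Frobenius norm of the Hessian of u. -/
def hessNormSq (u : ℂ → ℝ) (x : ℂ) : ℝ :=
  ‖fderiv ℝ (gradient u) x 1‖ ^ 2 + ‖fderiv ℝ (gradient u) x Complex.I‖ ^ 2

/-- Squared Frobenius norm of the Jacobian of a planar map w. -/
def jacNormSq (w : ℂ → ℂ) (x : ℂ) : ℝ :=
  ‖fderiv ℝ w x 1‖ ^ 2 + ‖fderiv ℝ w x Complex.I‖ ^ 2


/-- The dual field G = −i·(F_* ∘ F⁻¹) associated to H. -/
def dualG (H : ℂ → ℂ) (ξ : ℂ) : ℂ :=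
  -Complex.I * Fstar H (Function.invFun (Fmap H) ξ)

/-- The dual field G* = i·(F ∘ F_*⁻¹) associated to H. -/
def dualGstar (H : ℂ → ℂ) (ξ : ℂ) : ℂ :=
  Complex.I * Fmap H (Function.invFun (Fstar H) ξ)


/-! ### Auxiliary lemmas -/

section MyAux

open Function Bornology

lemma my_inner (x y : ℂ) : ⟪x, y⟫ = x.re * y.re + x.im * y.im := by
  simp [RCLike.inner_apply, Complex.mul_re]; ring

lemma my_norm_sq (x : ℂ) : ‖x‖^2 = x.re^2 + x.im^2 := by
  rw [Complex.sq_norm]; simp [Complex.normSq_apply]; ring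

lemma my_e1 (X : ℂ) : -Complex.I * (X/(2*Complex.I)) = -(X/2) := by
  field_simp

lemma my_e2 (X : ℂ) : X/(2*Complex.I) = Complex.I * (-X/2) := by
  field_simp
  linear_combination X * Complex.I_sq

lemma my_inner_I (a b : ℂ) : ⟪Complex.I * a, Complex.I * b⟫ = ⟪a, b⟫ := by
  simp [my_inner, Complex.mul_re, Complex.mul_im]

lemma my_key_inner (a b : ℂ) : ⟪(a - b)/2, (b + a)/2⟫ = (‖a‖^2 - ‖b‖^2)/4 := by
  have h2 : ∀ X : ℂ, X/2 = (2:ℝ)⁻¹ • X := by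
    intro X; rw [Complex.real_smul]; push_cast; ring
  rw [h2, h2, real_inner_smul_left, real_inner_smul_right, inner_sub_left,
    inner_add_right, inner_add_right, real_inner_comm b a,
    real_inner_self_eq_norm_sq, real_inner_self_eq_norm_sq]
  ring

lemma my_cobounded (P : ℂ → Prop) (h : ∀ᶠ z in cobounded ℂ, P z) :
    ∃ R > 0, ∀ z : ℂ, R ≤ ‖z‖ → P z := by
  rw [← comap_norm_atTop, eventually_comap] at h
  obtain ⟨b, hb⟩ := h.exists_forall_of_atTop
  exact ⟨max b 1, lt_of_lt_of_le one_pos (le_max_right _ _), fun z hz =>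
    hb ‖z‖ (le_trans (le_max_left _ _) hz) z rfl⟩

lemma my_surj (K : ℂ → ℂ) (hK : LipschitzWith 1 K)
    (hco : Tendsto (fun z : ℂ => ‖z‖ + ⟪K z, z⟫ / ‖z‖) (cobounded ℂ) atTop) :
    ∀ c : ℂ, ∃ z : ℂ, z + K z = c := by
  intro c
  obtain ⟨R, hR0, hRbig⟩ := my_cobounded _ (hco.eventually_ge_atTop (2*‖c‖+1))
  have key : ∀ r : ℝ, 1/2 ≤ r → r < 1 → ∃ z : ℂ, ‖z‖ ≤ R ∧ z + r • K z = c := by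
    intro r hr2 hr1
    have hr0 : (0:ℝ) ≤ r := le_trans (by norm_num) hr2
    have hg : LipschitzWith ⟨r, hr0⟩ (fun z : ℂ => c - r • K z) := by
      apply LipschitzWith.of_dist_le_mul
      intro x y
      have h := hK.dist_le_mul x y
      simp only [NNReal.coe_one, one_mul] at h
      calc dist (c - r • K x) (c - r • K y) = dist (r • K x) (r • K y) :=
            dist_sub_left c _ _
        _ = r * dist (K x) (K y) := by
            rw [dist_smul₀, Real.norm_eq_abs, _root_.abs_of_nonneg hr0]
        _ ≤ r * dist x y := mul_le_mul_of_nonneg_left h hr0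
        _ = _ := rfl
    have hcontr : ContractingWith ⟨r, hr0⟩ (fun z : ℂ => c - r • K z) :=
      ⟨by exact_mod_cast hr1, hg⟩
    set z := hcontr.fixedPoint (fun z : ℂ => c - r • K z) with hzdef
    have hz : c - r • K z = z := hcontr.fixedPoint_isFixedPt
    have heq : z + r • K z = c := eq_sub_iff_add_eq.mp hz.symm
    refine ⟨z, ?_, heq⟩
    by_contra hbig
    push_neg at hbig
    have hznorm : (0:ℝ) < ‖z‖ := lt_trans hR0 hbig
    have hbig2 := hRbig z hbig.le
    have e1 : ⟪c, z⟫ = ‖z‖^2 + r * ⟪K z, z⟫ := by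
      rw [← heq, inner_add_left, real_inner_smul_left, real_inner_self_eq_norm_sq]
    have e2 : (2*‖c‖+1) * ‖z‖ ≤ ‖z‖^2 + ⟪K z, z⟫ := by
      have h' := mul_le_mul_of_nonneg_right hbig2 hznorm.le
      calc (2*‖c‖+1) * ‖z‖ ≤ (‖z‖ + ⟪K z, z⟫ / ‖z‖) * ‖z‖ := h'
        _ = ‖z‖^2 + ⟪K z, z⟫ := by
            rw [add_mul, div_mul_cancel₀ _ hznorm.ne', sq]
    have e3 : ⟪c, z⟫ ≤ ‖c‖ * ‖z‖ := real_inner_le_norm c z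
    nlinarith [mul_le_mul_of_nonneg_left e2 hr0,
      mul_le_mul_of_nonneg_right hr2 (mul_nonneg
        (by positivity : (0:ℝ) ≤ 2*‖c‖+1) hznorm.le),
      mul_nonneg (sub_nonneg.mpr hr1.le) (sq_nonneg ‖z‖), hznorm, norm_nonneg c]
  have hr2 : ∀ n : ℕ, (1:ℝ)/2 ≤ 1 - 1/((n:ℝ)+2) := by
    intro n
    have h1 : (1:ℝ)/((n:ℝ)+2) ≤ 1/2 := by
      rw [div_le_div_iff₀ (by positivity) (by norm_num)]
      have : (0:ℝ) ≤ (n:ℝ) := Nat.cast_nonneg n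
      linarith
    linarith
  have hr1 : ∀ n : ℕ, (1:ℝ) - 1/((n:ℝ)+2) < 1 := by
    intro n
    have : (0:ℝ) < 1/((n:ℝ)+2) := by positivity
    linarith
  choose z hz hzeq using fun n : ℕ => key (1 - 1/((n:ℝ)+2)) (hr2 n) (hr1 n)
  obtain ⟨a, -, φ, hφ, hconv⟩ := (isCompact_closedBall (0:ℂ) R).tendsto_subseq
    (x := z) (fun n => by simpa [mem_closedBall, dist_zero_right] using hz n)
  refine ⟨a, ?_⟩
  have hKcont : Continuous K := hK.continuous
  have hrten : Tendsto (fun n : ℕ => 1 - 1/((n:ℝ)+2)) atTop (𝓝 1) := by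
    have h2 : Tendsto (fun n : ℕ => ((n:ℝ)+2)) atTop atTop :=
      tendsto_atTop_add_const_right _ 2 tendsto_natCast_atTop_atTop
    have h3 : Tendsto (fun n : ℕ => 1/((n:ℝ)+2)) atTop (𝓝 0) := by
      simp only [one_div]; exact h2.inv_tendsto_atTop
    simpa using (tendsto_const_nhds (x := (1:ℝ))).sub h3
  have h1 : Tendsto (fun n => z (φ n) + (1 - 1/((φ n : ℝ)+2)) • K (z (φ n))) atTop
      (𝓝 (a + (1:ℝ) • K a)) :=
    hconv.add ((hrten.comp hφ.tendsto_atTop).smul ((hKcont.tendsto a).comp hconv))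
  have h2 : Tendsto (fun _ : ℕ => c) atTop (𝓝 (a + (1:ℝ) • K a)) := by
    have he : (fun n : ℕ => z (φ n) + (1 - 1/((φ n : ℝ)+2)) • K (z (φ n)))
        = fun _ : ℕ => c := by
      funext n; exact hzeq (φ n)
    rwa [he] at h1
  have h3 := tendsto_nhds_unique h2 tendsto_const_nhds
  rw [← h3]; simp

variable {H : ℂ → ℂ}

lemma my_Hlip (hH : StrictlyOneLipschitz H) : LipschitzWith 1 H := by
  apply LipschitzWith.of_dist_le_mul
  intro x y
  rcases eq_or_ne x y with rfl | h
  · simp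
  · simp only [dist_eq_norm, NNReal.coe_one, one_mul]
    exact (hH x y h).le

lemma my_Hcont (hH : StrictlyOneLipschitz H) : Continuous H := (my_Hlip hH).continuous

lemma my_Fmap_cont (hH : StrictlyOneLipschitz H) : Continuous (Fmap H) := by
  unfold Fmap
  exact ((my_Hcont hH).add (Complex.continuous_conj)).div_const 2

lemma my_Fstar_cont (hH : StrictlyOneLipschitz H) : Continuous (Fstar H) := by
  unfold Fstar
  exact ((my_Hcont hH).sub (Complex.continuous_conj)).div_const _

lemma my_Fmap_inj (hH : StrictlyOneLipschitz H) : Injective (Fmap H) := by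
  intro z w h
  by_contra hne
  have h2 : H z + (starRingEnd ℂ) z = H w + (starRingEnd ℂ) w := by
    have h3 := congrArg (· * (2:ℂ)) h
    simpa [Fmap, div_mul_cancel₀] using h3
  have h3 : (starRingEnd ℂ) (z - w) = -(H z - H w) := by
    rw [map_sub]; linear_combination h2
  have h4 : ‖z - w‖ ≤ ‖H z - H w‖ := by
    rw [← RCLike.norm_conj (z - w), h3, norm_neg]
  exact absurd (hH z w hne) (not_lt.mpr h4)

lemma my_Fstar_inj (hH : StrictlyOneLipschitz H) : Injective (Fstar H) := by
  intro z w h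
  by_contra hne
  have h2 : H z - (starRingEnd ℂ) z = H w - (starRingEnd ℂ) w := by
    have h3 := congrArg (· * (2*Complex.I)) h
    simpa [Fstar, div_mul_cancel₀ _ (mul_ne_zero (two_ne_zero) Complex.I_ne_zero)] using h3
  have h3 : (starRingEnd ℂ) (z - w) = H z - H w := by
    rw [map_sub]; linear_combination -h2
  have h4 : ‖z - w‖ ≤ ‖H z - H w‖ := by
    rw [← RCLike.norm_conj (z - w), h3]
  exact absurd (hH z w hne) (not_lt.mpr h4)

lemma my_conj_lip : LipschitzWith 1 (fun z : ℂ => (starRingEnd ℂ) z) := by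
  apply LipschitzWith.of_dist_le_mul
  intro x y
  simp [Complex.dist_conj_conj]

lemma my_Fmap_surj (hH : StrictlyOneLipschitz H) (hinf : CondInfty H) :
    Surjective (Fmap H) := by
  intro c
  have hK : LipschitzWith 1 (fun z : ℂ => (starRingEnd ℂ) (H z)) := by
    simpa [Function.comp_def] using my_conj_lip.comp (my_Hlip hH)
  obtain ⟨z, hz⟩ := my_surj _ hK hinf.1 ((starRingEnd ℂ) (2*c))
  refine ⟨z, ?_⟩
  have h2 := congrArg (starRingEnd ℂ) hz
  simp only [map_add, Complex.conj_conj] at h2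
  unfold Fmap
  rw [div_eq_iff (two_ne_zero)]
  linear_combination h2

lemma my_Fstar_surj (hH : StrictlyOneLipschitz H) (hinf : CondInfty H) :
    Surjective (Fstar H) := by
  intro c
  have hK : LipschitzWith 1 (fun z : ℂ => -((starRingEnd ℂ) (H z))) := by
    have : LipschitzWith 1 (fun z : ℂ => (starRingEnd ℂ) (H z)) := by
      simpa [Function.comp_def] using my_conj_lip.comp (my_Hlip hH)
    exact this.neg
  have hco : Tendsto (fun z : ℂ => ‖z‖ + ⟪-((starRingEnd ℂ) (H z)), z⟫ / ‖z‖)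
      (cobounded ℂ) atTop := by
    have : (fun z : ℂ => ‖z‖ + ⟪-((starRingEnd ℂ) (H z)), z⟫ / ‖z‖)
        = fun z : ℂ => ‖z‖ - ⟪(starRingEnd ℂ) (H z), z⟫ / ‖z‖ := by
      funext z; rw [inner_neg_left, neg_div, sub_eq_add_neg]
    rw [this]; exact hinf.2
  obtain ⟨z, hz⟩ := my_surj _ hK hco (-((starRingEnd ℂ) (2*Complex.I*c)))
  refine ⟨z, ?_⟩
  have h2 := congrArg (starRingEnd ℂ) hz
  simp only [map_add, map_neg, Complex.conj_conj] at h2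
  unfold Fstar
  rw [div_eq_iff (mul_ne_zero (two_ne_zero) Complex.I_ne_zero)]
  linear_combination -h2

lemma my_inner_F (z h : ℂ) :
    ⟪h + (starRingEnd ℂ) z, (starRingEnd ℂ) z⟫ = ‖z‖^2 + ⟪(starRingEnd ℂ) h, z⟫ := by
  simp [my_inner, Complex.sq_norm, Complex.normSq_apply]; ring

lemma my_inner_Fstar (z h : ℂ) :
    ⟪h - (starRingEnd ℂ) z, -((starRingEnd ℂ) z)⟫ = ‖z‖^2 - ⟪(starRingEnd ℂ) h, z⟫ := by
  simp [my_inner, Complex.sq_norm, Complex.normSq_apply]; ring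

end MyAux

section MyAux2

open Function Bornology

variable {H : ℂ → ℂ}

lemma my_Fmap_proper (hH : StrictlyOneLipschitz H) (hinf : CondInfty H) :
    Tendsto (Fmap H) (cocompact ℂ) (cocompact ℂ) := by
  rw [← cobounded_eq_cocompact, ← comap_norm_atTop, tendsto_comap_iff,
    comap_norm_atTop]
  apply tendsto_atTop_mono' _ _ (hinf.1.atTop_div_const (by norm_num : (0:ℝ) < 2))
  filter_upwards [eventually_cobounded_le_norm (1:ℝ)] with z hz
  have hzpos : (0:ℝ) < ‖z‖ := lt_of_lt_of_le one_pos hz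
  have hcs : ⟪H z + (starRingEnd ℂ) z, (starRingEnd ℂ) z⟫
      ≤ ‖H z + (starRingEnd ℂ) z‖ * ‖z‖ := by
    have := real_inner_le_norm (H z + (starRingEnd ℂ) z) ((starRingEnd ℂ) z)
    rwa [RCLike.norm_conj] at this
  rw [my_inner_F] at hcs
  have hnorm : ‖Fmap H z‖ = ‖H z + (starRingEnd ℂ) z‖ / 2 := by
    unfold Fmap
    rw [norm_div]
    norm_num
  have h1 : ‖z‖ + ⟪(starRingEnd ℂ) (H z), z⟫ / ‖z‖
      ≤ ‖H z + (starRingEnd ℂ) z‖ := by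
    rw [← mul_le_mul_iff_of_pos_right hzpos, add_mul, div_mul_cancel₀ _ hzpos.ne']
    calc ‖z‖ * ‖z‖ + ⟪(starRingEnd ℂ) (H z), z⟫
        = ‖z‖^2 + ⟪(starRingEnd ℂ) (H z), z⟫ := by rw [sq]
      _ ≤ ‖H z + (starRingEnd ℂ) z‖ * ‖z‖ := hcs
  simp only [Function.comp_apply]
  rw [hnorm]
  gcongr

lemma my_Fstar_proper (hH : StrictlyOneLipschitz H) (hinf : CondInfty H) :
    Tendsto (Fstar H) (cocompact ℂ) (cocompact ℂ) := by
  rw [← cobounded_eq_cocompact, ← comap_norm_atTop, tendsto_comap_iff,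
    comap_norm_atTop]
  apply tendsto_atTop_mono' _ _ (hinf.2.atTop_div_const (by norm_num : (0:ℝ) < 2))
  filter_upwards [eventually_cobounded_le_norm (1:ℝ)] with z hz
  have hzpos : (0:ℝ) < ‖z‖ := lt_of_lt_of_le one_pos hz
  have hcs : ⟪H z - (starRingEnd ℂ) z, -((starRingEnd ℂ) z)⟫
      ≤ ‖H z - (starRingEnd ℂ) z‖ * ‖z‖ := by
    have := real_inner_le_norm (H z - (starRingEnd ℂ) z) (-((starRingEnd ℂ) z))
    rwa [norm_neg, RCLike.norm_conj] at this
  rw [my_inner_Fstar] at hcs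
  have hnorm : ‖Fstar H z‖ = ‖H z - (starRingEnd ℂ) z‖ / 2 := by
    unfold Fstar
    rw [norm_div, norm_mul, Complex.norm_I]
    norm_num
  have h1 : ‖z‖ - ⟪(starRingEnd ℂ) (H z), z⟫ / ‖z‖
      ≤ ‖H z - (starRingEnd ℂ) z‖ := by
    rw [← mul_le_mul_iff_of_pos_right hzpos, sub_mul, div_mul_cancel₀ _ hzpos.ne']
    calc ‖z‖ * ‖z‖ - ⟪(starRingEnd ℂ) (H z), z⟫
        = ‖z‖^2 - ⟪(starRingEnd ℂ) (H z), z⟫ := by rw [sq]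
      _ ≤ ‖H z - (starRingEnd ℂ) z‖ * ‖z‖ := hcs
  simp only [Function.comp_apply]
  rw [hnorm]
  gcongr

lemma my_inv_cont {F : ℂ → ℂ} (hcont : Continuous F) (hinj : Injective F)
    (hsurj : Surjective F) (hproper : Tendsto F (cocompact ℂ) (cocompact ℂ)) :
    Continuous (invFun F) := by
  have hclosed : IsClosedMap F :=
    (isProperMap_iff_tendsto_cocompact.mpr ⟨hcont, hproper⟩).isClosedMap
  rw [continuous_iff_isClosed]
  intro C hC
  have himg : invFun F ⁻¹' C = F '' C := by
    ext x
    constructor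
    · intro hx
      exact ⟨invFun F x, hx, rightInverse_invFun hsurj x⟩
    · rintro ⟨y, hy, rfl⟩
      rwa [Set.mem_preimage, leftInverse_invFun hinj y]
  rw [himg]
  exact hclosed C hC

lemma my_dualG_cont (hH : StrictlyOneLipschitz H) (hinf : CondInfty H) :
    Continuous (dualG H) := by
  unfold dualG
  exact continuous_const.mul ((my_Fstar_cont hH).comp
    (my_inv_cont (my_Fmap_cont hH) (my_Fmap_inj hH) (my_Fmap_surj hH hinf)
      (my_Fmap_proper hH hinf)))

lemma my_dualGstar_cont (hH : StrictlyOneLipschitz H) (hinf : CondInfty H) :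
    Continuous (dualGstar H) := by
  unfold dualGstar
  exact continuous_const.mul ((my_Fmap_cont hH).comp
    (my_inv_cont (my_Fstar_cont hH) (my_Fstar_inj hH) (my_Fstar_surj hH hinf)
      (my_Fstar_proper hH hinf)))

lemma my_norm_conj_sub (z w : ℂ) : ‖(starRingEnd ℂ) z - (starRingEnd ℂ) w‖ = ‖z - w‖ := by
  rw [← map_sub, RCLike.norm_conj]

lemma my_dualG_mono (hH : StrictlyOneLipschitz H) (hinf : CondInfty H) :
    StrictlyMonotoneField (dualG H) := by
  intro ξ ζ hne
  set z := invFun (Fmap H) ξ with hzdef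
  set w := invFun (Fmap H) ζ with hwdef
  have hz : Fmap H z = ξ := rightInverse_invFun (my_Fmap_surj hH hinf) ξ
  have hw : Fmap H w = ζ := rightInverse_invFun (my_Fmap_surj hH hinf) ζ
  have hzw : z ≠ w := by
    intro h
    exact hne (by rw [← hz, ← hw, h])
  have hG : dualG H ξ - dualG H ζ
      = (((starRingEnd ℂ) z - (starRingEnd ℂ) w) - (H z - H w)) / 2 := by
    unfold dualG Fstar
    rw [← hzdef, ← hwdef, my_e1, my_e1]
    ring
  have hX : ξ - ζ = ((H z - H w) + ((starRingEnd ℂ) z - (starRingEnd ℂ) w)) / 2 := by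
    rw [← hz, ← hw]
    unfold Fmap
    ring
  rw [hG, hX, my_key_inner, my_norm_conj_sub]
  have hlt := hH z w hzw
  have hsq : ‖H z - H w‖^2 < ‖z - w‖^2 := by
    apply pow_lt_pow_left₀ hlt (norm_nonneg _)
    norm_num
  linarith

lemma my_dualGstar_mono (hH : StrictlyOneLipschitz H) (hinf : CondInfty H) :
    StrictlyMonotoneField (dualGstar H) := by
  intro ξ ζ hne
  set z := invFun (Fstar H) ξ with hzdef
  set w := invFun (Fstar H) ζ with hwdef
  have hz : Fstar H z = ξ := rightInverse_invFun (my_Fstar_surj hH hinf) ξ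
  have hw : Fstar H w = ζ := rightInverse_invFun (my_Fstar_surj hH hinf) ζ
  have hzw : z ≠ w := by
    intro h
    exact hne (by rw [← hz, ← hw, h])
  have hG : dualGstar H ξ - dualGstar H ζ
      = Complex.I * (((H z - H w) + ((starRingEnd ℂ) z - (starRingEnd ℂ) w)) / 2) := by
    unfold dualGstar Fmap
    rw [← hzdef, ← hwdef]
    ring
  have hX : ξ - ζ = Complex.I * ((((starRingEnd ℂ) z - (starRingEnd ℂ) w) - (H z - H w)) / 2) := by
    rw [← hz, ← hw]
    unfold Fstar
    rw [my_e2, my_e2]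
    ring
  rw [hG, hX, my_inner_I, real_inner_comm, my_key_inner, my_norm_conj_sub]
  have hlt := hH z w hzw
  have hsq : ‖H z - H w‖^2 < ‖z - w‖^2 := by
    apply pow_lt_pow_left₀ hlt (norm_nonneg _)
    norm_num
  linarith


-- directional difference quotient convergence
lemma my_dirderiv {g : ℂ → ℝ} {x : ℂ} (hx : DifferentiableAt ℝ g x) (e : ℂ) :
    Tendsto (fun n : ℕ => (g (x + (1/((n:ℝ)+1)) • e) - g x) / (1/((n:ℝ)+1)))
      atTop (𝓝 (fderiv ℝ g x e)) := by
  have hline : HasDerivAt (fun t : ℝ => g (x + t • e)) (fderiv ℝ g x e) 0 := by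
    have h2 : HasDerivAt (fun t : ℝ => x + t • e) e 0 := by
      simpa using ((hasDerivAt_id (0:ℝ)).smul_const e).const_add x
    have h1 : HasFDerivAt g (fderiv ℝ g x) (x + (0:ℝ) • e) := by
      simpa using hx.hasFDerivAt
    exact h1.comp_hasDerivAt 0 h2
  rw [hasDerivAt_iff_tendsto_slope] at hline
  have hhn : Tendsto (fun n : ℕ => 1/((n:ℝ)+1)) atTop (𝓝[≠] (0:ℝ)) := by
    apply tendsto_nhdsWithin_of_tendsto_nhds_of_eventually_within
    · exact tendsto_one_div_add_atTop_nhds_zero_nat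
    · refine Eventually.of_forall fun n => ?_
      simp only [Set.mem_compl_iff, Set.mem_singleton_iff]
      positivity
  have := hline.comp hhn
  simp only [Function.comp_def, slope_def_field] at this
  simpa [slope_def_field] using this

lemma my_ibp (g : ℂ → ℝ) (L : NNReal) (hg : LipschitzWith L g) (ψ : ℂ → ℝ)
    (hψ : ContDiff ℝ (⊤ : ℕ∞) ψ) (hψc : HasCompactSupport ψ) (e : ℂ) :
    ∫ x : ℂ, fderiv ℝ g x e * ψ x = - ∫ x : ℂ, g x * fderiv ℝ ψ x e := by
  set hn : ℕ → ℝ := fun n => 1/((n:ℝ)+1) with hhn_def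
  have hn_pos : ∀ n, 0 < hn n := fun n => by positivity
  have hn_le : ∀ n, hn n ≤ 1 := by
    intro n
    rw [hhn_def]
    rw [div_le_one (by positivity)]
    linarith [Nat.cast_nonneg (α := ℝ) n]
  set F : ℕ → ℂ → ℝ := fun n x => (g (x + hn n • e) - g x) / hn n * ψ x with hF_def
  -- Step A: DCT for F
  have hψ_int : Integrable ψ := hψ.continuous.integrable_of_hasCompactSupport hψc
  have hFlim : Tendsto (fun n => ∫ x : ℂ, F n x) atTop (𝓝 (∫ x : ℂ, fderiv ℝ g x e * ψ x)) := by
    apply tendsto_integral_of_dominated_convergence (fun x => (L:ℝ) * ‖e‖ * ‖ψ x‖)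
    · intro n
      apply Continuous.aestronglyMeasurable
      exact (((hg.continuous.comp (continuous_id.add continuous_const)).sub
        hg.continuous).div_const _).mul hψ.continuous
    · exact (hψ_int.norm.const_mul _)
    · intro n
      apply Eventually.of_forall
      intro x
      rw [hF_def]
      simp only [norm_mul, Real.norm_eq_abs]
      gcongr
      rw [abs_div]
      rw [div_le_iff₀ (by simpa [abs_of_pos (hn_pos n)] using hn_pos n : 0 < |hn n|)]
      calc |g (x + hn n • e) - g x| ≤ (L:ℝ) * ‖(x + hn n • e) - x‖ := by
            have := hg.dist_le_mul (x + hn n • e) x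
            simpa [Real.dist_eq, dist_eq_norm] using this
        _ = (L:ℝ) * ‖e‖ * |hn n| := by
            simp [norm_smul, abs_of_pos (hn_pos n)]
            ring
    · filter_upwards [hg.ae_differentiableAt] with x hx
      exact (my_dirderiv hx e).mul_const (ψ x)
  -- Step B : rewrite ∫ F n via translation
  set G : ℕ → ℂ → ℝ := fun n y => g y * ((ψ (y - hn n • e) - ψ y) / hn n) with hG_def
  have hint_translate : ∀ n, ∫ x : ℂ, F n x = ∫ y : ℂ, G n y := by
    intro n
    have hI1 : Integrable (fun x : ℂ => g (x + hn n • e) * ψ x) := by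
      apply Continuous.integrable_of_hasCompactSupport
      · exact (hg.continuous.comp (continuous_id.add continuous_const)).mul hψ.continuous
      · exact hψc.mul_left
    have hI2 : Integrable (fun x : ℂ => g x * ψ x) := by
      apply Continuous.integrable_of_hasCompactSupport
      · exact hg.continuous.mul hψ.continuous
      · exact hψc.mul_left
    have hI3 : Integrable (fun y : ℂ => g y * ψ (y - hn n • e)) := by
      apply Continuous.integrable_of_hasCompactSupport
      · exact hg.continuous.mul (hψ.continuous.comp (continuous_id.sub continuous_const))
      · apply HasCompactSupport.mul_left
        exact hψc.comp_homeomorph (Homeomorph.subRight (hn n • e))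
    have htrans : ∫ x : ℂ, g (x + hn n • e) * ψ x = ∫ y : ℂ, g y * ψ (y - hn n • e) := by
      have := integral_add_right_eq_self (μ := volume)
        (fun y : ℂ => g y * ψ (y - hn n • e)) (hn n • e)
      rw [← this]
      congr 1
      funext x
      simp
    have e1 : ∀ x, F n x = (hn n)⁻¹ * (g (x + hn n • e) * ψ x) - (hn n)⁻¹ * (g x * ψ x) := by
      intro x; rw [hF_def]; ring
    have e2 : ∀ y, G n y = (hn n)⁻¹ * (g y * ψ (y - hn n • e)) - (hn n)⁻¹ * (g y * ψ y) := by
      intro y; rw [hG_def]; ring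
    calc ∫ x : ℂ, F n x
        = ∫ x : ℂ, ((hn n)⁻¹ * (g (x + hn n • e) * ψ x) - (hn n)⁻¹ * (g x * ψ x)) := by
          simp_rw [e1]
      _ = (hn n)⁻¹ * (∫ x : ℂ, g (x + hn n • e) * ψ x) - (hn n)⁻¹ * (∫ x : ℂ, g x * ψ x) := by
          rw [integral_sub (hI1.const_mul _) (hI2.const_mul _), integral_const_mul,
            integral_const_mul]
      _ = (hn n)⁻¹ * (∫ y : ℂ, g y * ψ (y - hn n • e)) - (hn n)⁻¹ * (∫ y : ℂ, g y * ψ y) := by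
          rw [htrans]
      _ = ∫ y : ℂ, G n y := by
          rw [← integral_const_mul, ← integral_const_mul, ← integral_sub (hI3.const_mul _)
            (hI2.const_mul _)]
          congr 1
          funext y
          rw [e2 y]
  -- Step C : DCT for G
  obtain ⟨Lψ, hLψ⟩ := hψ.lipschitzWith_of_hasCompactSupport hψc (by simp)
  set Kset : Set ℂ := cthickening ‖e‖ (tsupport ψ) with hKset_def
  have hKset_cpt : IsCompact Kset := hψc.cthickening
  obtain ⟨M, hM⟩ : ∃ M, ∀ y ∈ Kset, ‖g y‖ ≤ M :=
    hKset_cpt.exists_bound_of_continuousOn hg.continuous.continuousOn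
  have hGlim : Tendsto (fun n => ∫ y : ℂ, G n y) atTop
      (𝓝 (∫ y : ℂ, g y * -(fderiv ℝ ψ y e))) := by
    apply tendsto_integral_of_dominated_convergence
      (Kset.indicator fun _ => M * ((Lψ:ℝ) * ‖e‖))
    · intro n
      apply Continuous.aestronglyMeasurable
      exact hg.continuous.mul (((hψ.continuous.comp
        (continuous_id.sub continuous_const)).sub hψ.continuous).div_const _)
    · rw [integrable_indicator_iff hKset_cpt.isClosed.measurableSet]
      exact integrableOn_const hKset_cpt.measure_lt_top.ne
    · intro n
      apply Eventually.of_forall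
      intro y
      by_cases hy : y ∈ Kset
      · rw [Set.indicator_of_mem hy]
        rw [hG_def]
        simp only [norm_mul]
        have hb1 : ‖g y‖ ≤ M := hM y hy
        have hb2 : ‖(ψ (y - hn n • e) - ψ y) / hn n‖ ≤ (Lψ:ℝ) * ‖e‖ := by
          rw [Real.norm_eq_abs, abs_div, div_le_iff₀ (by
            simpa [abs_of_pos (hn_pos n)] using hn_pos n : 0 < |hn n|)]
          calc |ψ (y - hn n • e) - ψ y| ≤ (Lψ:ℝ) * ‖(y - hn n • e) - y‖ := by
                have := hLψ.dist_le_mul (y - hn n • e) y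
                simpa [Real.dist_eq, dist_eq_norm] using this
            _ = (Lψ:ℝ) * ‖e‖ * |hn n| := by
                simp [norm_smul, abs_of_pos (hn_pos n)]
                ring
        exact mul_le_mul hb1 hb2 (norm_nonneg _) ((norm_nonneg (g y)).trans hb1)
      · rw [Set.indicator_of_notMem hy]
        have hy1 : ψ y = 0 := by
          apply image_eq_zero_of_notMem_tsupport
          intro hmem
          exact hy (self_subset_cthickening _ hmem)
        have hy2 : ψ (y - hn n • e) = 0 := by
          apply image_eq_zero_of_notMem_tsupport
          intro hmem
          apply hy
          apply mem_cthickening_of_dist_le y (y - hn n • e) _ _ hmem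
          rw [dist_eq_norm]
          simp only [sub_sub_cancel]
          rw [norm_smul, Real.norm_eq_abs, abs_of_pos (hn_pos n)]
          calc hn n * ‖e‖ ≤ 1 * ‖e‖ := by
                apply mul_le_mul_of_nonneg_right (hn_le n) (norm_nonneg e)
            _ = ‖e‖ := one_mul _
        simp only [hG_def]
        rw [hy2, hy1]
        simp
    · apply Eventually.of_forall
      intro y
      apply Tendsto.const_mul
      -- difference quotient of ψ in direction -e
      have hline : HasDerivAt (fun t : ℝ => ψ (y + t • (-e))) (fderiv ℝ ψ y (-e)) 0 := by
        have h2 : HasDerivAt (fun t : ℝ => y + t • (-e)) (-e) 0 := by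
          simpa using ((hasDerivAt_id (0:ℝ)).smul_const (-e)).const_add y
        have h1 : HasFDerivAt ψ (fderiv ℝ ψ y) (y + (0:ℝ) • (-e)) := by
          simpa using ((hψ.differentiable (by simp)) y).hasFDerivAt
        exact h1.comp_hasDerivAt 0 h2
      rw [hasDerivAt_iff_tendsto_slope] at hline
      have hhn' : Tendsto hn atTop (𝓝[≠] (0:ℝ)) := by
        apply tendsto_nhdsWithin_of_tendsto_nhds_of_eventually_within
        · exact tendsto_one_div_add_atTop_nhds_zero_nat
        · refine Eventually.of_forall fun n => ?_
          simp only [Set.mem_compl_iff, Set.mem_singleton_iff]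
          positivity
      have hcomp := hline.comp hhn'
      simp only [Function.comp_def, slope_def_field] at hcomp
      have : (fun n => (ψ (y + hn n • (-e)) - ψ (y + (0:ℝ) • (-e))) / (hn n - 0))
          = fun n => (ψ (y - hn n • e) - ψ y) / hn n := by
        funext n
        simp [smul_neg, sub_eq_add_neg]
      rw [this] at hcomp
      have hfneg : fderiv ℝ ψ y (-e) = -(fderiv ℝ ψ y e) := by
        rw [map_neg]
      rwa [hfneg] at hcomp
  -- combine
  have hGlim' : Tendsto (fun n => ∫ x : ℂ, F n x) atTop
      (𝓝 (∫ y : ℂ, g y * -(fderiv ℝ ψ y e))) := by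
    simp_rw [hint_translate]
    exact hGlim
  have := tendsto_nhds_unique hFlim hGlim'
  rw [this, ← integral_neg]
  congr 1
  funext y
  ring


lemma my_mixed (φ : ℂ → ℝ) (hφ : ContDiff ℝ (⊤ : ℕ∞) φ) (x a b : ℂ) :
    fderiv ℝ (fun y => fderiv ℝ φ y a) x b = fderiv ℝ (fun y => fderiv ℝ φ y b) x a := by
  have hd : ∀ y, HasFDerivAt φ (fderiv ℝ φ y) y :=
    fun y => ((hφ.differentiable (by simp)) y).hasFDerivAt
  have hd2 : DifferentiableAt ℝ (fderiv ℝ φ) x :=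
    ((hφ.fderiv_right (m := (⊤ : ℕ∞)) (by simp)).differentiable (by simp)) x
  have key : ∀ c : ℂ, fderiv ℝ (fun y => fderiv ℝ φ y c) x
      = (fderiv ℝ (fderiv ℝ φ) x).flip c := by
    intro c
    rw [fderiv_clm_apply hd2 (differentiableAt_const c)]
    simp
  have hsym := second_derivative_symmetric hd hd2.hasFDerivAt a b
  rw [key a, key b]
  simp only [ContinuousLinearMap.flip_apply]
  exact hsym.symm

lemma my_fderiv_apply_smooth (φ : ℂ → ℝ) (hφ : ContDiff ℝ (⊤ : ℕ∞) φ) (c : ℂ) :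
    ContDiff ℝ (⊤ : ℕ∞) (fun y => fderiv ℝ φ y c) :=
  (hφ.fderiv_right (by simp)).clm_apply contDiff_const

lemma my_fderiv_apply_cs (φ : ℂ → ℝ) (hφc : HasCompactSupport φ) (c : ℂ) :
    HasCompactSupport (fun y => fderiv ℝ φ y c) :=
  (hφc.fderiv ℝ).comp_left (g := fun L : ℂ →L[ℝ] ℝ => L c) rfl

lemma my_fderiv_bound {g : ℂ → ℝ} {L : NNReal} (hg : LipschitzWith L g) (x c : ℂ) :
    ‖fderiv ℝ g x c‖ ≤ (L:ℝ) * ‖c‖ := by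
  calc ‖fderiv ℝ g x c‖ ≤ ‖fderiv ℝ g x‖ * ‖c‖ := (fderiv ℝ g x).le_opNorm c
    _ ≤ (L:ℝ) * ‖c‖ :=
        mul_le_mul_of_nonneg_right (norm_fderiv_le_of_lipschitz ℝ hg) (norm_nonneg c)

lemma my_int_curl_term (g : ℂ → ℝ) (L : NNReal) (hg : LipschitzWith L g) (φ : ℂ → ℝ)
    (hφ : ContDiff ℝ (⊤ : ℕ∞) φ) (hφc : HasCompactSupport φ) (a b : ℂ) :
    Integrable (fun x : ℂ => fderiv ℝ g x a * fderiv ℝ φ x b) := by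
  have hb : Integrable (fun x : ℂ => (L:ℝ) * ‖a‖ * ‖fderiv ℝ φ x b‖) := by
    apply Integrable.const_mul
    apply Integrable.norm
    exact ((my_fderiv_apply_smooth φ hφ b).continuous).integrable_of_hasCompactSupport
      (my_fderiv_apply_cs φ hφc b)
  apply Integrable.mono' hb
  · apply AEStronglyMeasurable.mul
    · exact (measurable_fderiv_apply_const ℝ g a).aestronglyMeasurable
    · exact (my_fderiv_apply_smooth φ hφ b).continuous.aestronglyMeasurable
  · apply Eventually.of_forall
    intro x
    rw [norm_mul]
    exact mul_le_mul_of_nonneg_right (my_fderiv_bound hg x a) (norm_nonneg _)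

lemma my_curl (g : ℂ → ℝ) (L : NNReal) (hg : LipschitzWith L g) (φ : ℂ → ℝ)
    (hφ : ContDiff ℝ (⊤ : ℕ∞) φ) (hφc : HasCompactSupport φ) :
    ∫ x : ℂ, (fderiv ℝ g x Complex.I * fderiv ℝ φ x 1
      - fderiv ℝ g x 1 * fderiv ℝ φ x Complex.I) = 0 := by
  rw [integral_sub (my_int_curl_term g L hg φ hφ hφc Complex.I 1)
    (my_int_curl_term g L hg φ hφ hφc 1 Complex.I)]
  rw [my_ibp g L hg _ (my_fderiv_apply_smooth φ hφ 1) (my_fderiv_apply_cs φ hφc 1) Complex.I,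
    my_ibp g L hg _ (my_fderiv_apply_smooth φ hφ Complex.I)
      (my_fderiv_apply_cs φ hφc Complex.I) 1]
  rw [sub_eq_zero]
  congr 1
  apply integral_congr_ae
  apply Eventually.of_forall
  intro x
  simp only []
  rw [my_mixed φ hφ x 1 Complex.I]


lemma my_gradient (w : ℂ → ℝ) (x : ℂ) :
    gradient w x = (fderiv ℝ w x 1 : ℂ) + (fderiv ℝ w x Complex.I : ℂ) * Complex.I := by
  have h : ∀ y : ℂ, ⟪gradient w x, y⟫ = fderiv ℝ w x y := fun y => by
    rw [show gradient w x = (InnerProductSpace.toDual ℝ ℂ).symm (fderiv ℝ w x) from rfl,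
      InnerProductSpace.toDual_symm_apply]
  apply Complex.ext
  · have h1 := h 1
    rw [my_inner] at h1
    simpa using h1
  · have h2 := h Complex.I
    rw [my_inner] at h2
    simpa using h2

lemma my_weak (w : ℂ → ℝ) (L : NNReal) (hw : LipschitzWith L w) (φ : ℂ → ℝ)
    (hφ : ContDiff ℝ (⊤ : ℕ∞) φ) (hφc : HasCompactSupport φ) (hsupp : tsupport φ ⊆ ball 0 1)
    (V : ℂ → ℝ) (c : ℝ)
    (hV : ∀ᵐ x : ℂ, x ∈ ball (0:ℂ) 1 → V x = c * (fderiv ℝ w x Complex.I * fderiv ℝ φ x 1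
      - fderiv ℝ w x 1 * fderiv ℝ φ x Complex.I)) :
    ∫ x in ball (0:ℂ) 1, V x = 0 := by
  set W : ℂ → ℝ := fun x => c * (fderiv ℝ w x Complex.I * fderiv ℝ φ x 1
    - fderiv ℝ w x 1 * fderiv ℝ φ x Complex.I) with hW_def
  have h1 : ∫ x in ball (0:ℂ) 1, V x = ∫ x in ball (0:ℂ) 1, W x := by
    apply integral_congr_ae
    have := (ae_restrict_iff' (μ := volume) (p := fun x => V x = W x)
      measurableSet_ball).mpr hV
    exact this
  have h2 : ∫ x in ball (0:ℂ) 1, W x = ∫ x : ℂ, W x := by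
    apply setIntegral_eq_integral_of_forall_compl_eq_zero
    intro x hx
    have hnt : x ∉ tsupport φ := fun h => hx (hsupp h)
    have hfz : fderiv ℝ φ x = 0 :=
      Function.notMem_support.mp (fun hmem => hnt (support_fderiv_subset ℝ hmem))
    rw [hW_def]
    simp [hfz]
  rw [h1, h2, hW_def, integral_const_mul, my_curl w L hw φ hφ hφc, mul_zero]


lemma my_inner_coords (a b c d : ℝ) :
    ⟪(a:ℂ) + (b:ℂ)*Complex.I, (c:ℂ) + (d:ℂ)*Complex.I⟫ = a*c + b*d := by
  simp [my_inner]; ring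

lemma my_conjA (A : ℂ) : (starRingEnd ℂ) A = 2*(A.re:ℂ) - A := by
  have h := Complex.add_conj A
  push_cast at h
  linear_combination h

lemma my_conjA' (A : ℂ) : (starRingEnd ℂ) A = A - 2*(A.im:ℂ)*Complex.I := by
  have h := Complex.sub_conj A
  push_cast at h
  linear_combination -h

lemma my_alg_a1 (A B : ℂ) :
    (1/2:ℝ) • ((A.re:ℂ) + (B.re:ℂ)*Complex.I)
      = ((A + Complex.I * B)/2 + (starRingEnd ℂ) ((A - Complex.I*B)/2))/2 := by
  simp only [map_div₀, map_sub, map_mul, Complex.conj_I, map_ofNat]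
  rw [my_conjA A, my_conjA B, Complex.real_smul]
  push_cast
  ring

lemma my_alg_c1 (A B : ℂ) :
    -Complex.I * (((A + Complex.I * B)/2 - (starRingEnd ℂ) ((A - Complex.I*B)/2))/(2*Complex.I))
      = ((B.im/2 : ℝ):ℂ) + ((-(A.im)/2 : ℝ):ℂ)*Complex.I := by
  simp only [map_div₀, map_sub, map_mul, Complex.conj_I, map_ofNat]
  rw [my_conjA' A, my_conjA' B]
  field_simp
  push_cast
  linear_combination (-2*(B.im:ℂ)) * Complex.I_sq

lemma my_alg_a2 (A B : ℂ) :
    (1/2:ℝ) • ((A.im:ℂ) + (B.im:ℂ)*Complex.I)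
      = ((A + Complex.I * B)/2 - (starRingEnd ℂ) ((A - Complex.I*B)/2))/(2*Complex.I) := by
  simp only [map_div₀, map_sub, map_mul, Complex.conj_I, map_ofNat]
  rw [my_conjA' A, my_conjA' B, Complex.real_smul]
  push_cast
  field_simp
  ring_nf

lemma my_alg_c2 (A B : ℂ) :
    Complex.I * (((A + Complex.I * B)/2 + (starRingEnd ℂ) ((A - Complex.I*B)/2))/2)
      = ((-(B.re)/2 : ℝ):ℂ) + ((A.re/2 : ℝ):ℂ)*Complex.I := by
  simp only [map_div₀, map_sub, map_mul, Complex.conj_I, map_ofNat]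
  rw [my_conjA A, my_conjA B]
  field_simp
  push_cast
  linear_combination (2*(B.re:ℂ)) * Complex.I_sq

end MyAux2

theorem stmt15 (H : ℂ → ℂ) (hH : StrictlyOneLipschitz H) (hinf : CondInfty H) :
    Continuous (dualG H) ∧ StrictlyMonotoneField (dualG H) ∧
    Continuous (dualGstar H) ∧ StrictlyMonotoneField (dualGstar H) ∧
    ∀ f : ℂ → ℂ, IsBeltramiSol H f →
      (∀ φ : ℂ → ℝ, ContDiff ℝ (⊤ : ℕ∞) φ → HasCompactSupport φ → tsupport φ ⊆ ball 0 1 →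
        ∫ x in ball (0:ℂ) 1,
          ⟪dualG H ((1/2 : ℝ) • gradient (fun z => (f z).re) x), gradient φ x⟫ = 0) ∧
      (∀ φ : ℂ → ℝ, ContDiff ℝ (⊤ : ℕ∞) φ → HasCompactSupport φ → tsupport φ ⊆ ball 0 1 →
        ∫ x in ball (0:ℂ) 1,
          ⟪dualGstar H ((1/2 : ℝ) • gradient (fun z => (f z).im) x), gradient φ x⟫ = 0) := by
  refine ⟨my_dualG_cont hH hinf, my_dualG_mono hH hinf, my_dualGstar_cont hH hinf,
    my_dualGstar_mono hH hinf, ?_⟩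
  rintro f ⟨⟨Kf, hKf⟩, hbel⟩
  have hre : LipschitzWith 1 (fun z : ℂ => z.re) := by
    apply LipschitzWith.of_dist_le_mul
    intro a b
    rw [NNReal.coe_one, one_mul, Real.dist_eq, Complex.dist_eq]
    simpa [Complex.sub_re] using Complex.abs_re_le_norm (a - b)
  have him : LipschitzWith 1 (fun z : ℂ => z.im) := by
    apply LipschitzWith.of_dist_le_mul
    intro a b
    rw [NNReal.coe_one, one_mul, Real.dist_eq, Complex.dist_eq]
    simpa [Complex.sub_im] using Complex.abs_im_le_norm (a - b)
  obtain ⟨P, hP, hPeq⟩ := (hre.comp_lipschitzOnWith hKf).extend_real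
  obtain ⟨Q, hQ, hQeq⟩ := (him.comp_lipschitzOnWith hKf).extend_real
  have hmain : ∀ᵐ x : ℂ, x ∈ ball (0:ℂ) 1 →
      (dualG H ((1/2:ℝ) • gradient (fun z => (f z).re) x)
          = ((fderiv ℝ Q x Complex.I / 2 : ℝ):ℂ)
            + ((-(fderiv ℝ Q x 1) / 2 : ℝ):ℂ) * Complex.I
        ∧ dualGstar H ((1/2:ℝ) • gradient (fun z => (f z).im) x)
          = ((-(fderiv ℝ P x Complex.I) / 2 : ℝ):ℂ)
            + ((fderiv ℝ P x 1 / 2 : ℝ):ℂ) * Complex.I) := by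
    filter_upwards [hbel, hP.ae_differentiableAt, hQ.ae_differentiableAt]
      with x hbelx hPx hQx hx
    have hball : ball (0:ℂ) 1 ∈ 𝓝 x := isOpen_ball.mem_nhds hx
    have hfeq : (fun z => ((P z : ℂ) + (Q z : ℂ) * Complex.I)) =ᶠ[𝓝 x] f := by
      filter_upwards [hball] with z hz
      rw [← hPeq hz, ← hQeq hz]
      exact Complex.re_add_im (f z)
    have hfdiff : DifferentiableAt ℝ f x := by
      apply (Filter.EventuallyEq.differentiableAt_iff hfeq).mp
      apply DifferentiableAt.add
      · exact Complex.ofRealCLM.differentiableAt.comp x hPx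
      · exact (Complex.ofRealCLM.differentiableAt.comp x hQx).mul_const _
    have hre_e : fderiv ℝ (fun z => (f z).re) x = Complex.reCLM.comp (fderiv ℝ f x) := by
      have h1 : HasFDerivAt (fun z => (f z).re) (Complex.reCLM.comp (fderiv ℝ f x)) x :=
        Complex.reCLM.hasFDerivAt.comp x hfdiff.hasFDerivAt
      exact h1.fderiv
    have him_e : fderiv ℝ (fun z => (f z).im) x = Complex.imCLM.comp (fderiv ℝ f x) := by
      have h1 : HasFDerivAt (fun z => (f z).im) (Complex.imCLM.comp (fderiv ℝ f x)) x :=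
        Complex.imCLM.hasFDerivAt.comp x hfdiff.hasFDerivAt
      exact h1.fderiv
    have hPev : P =ᶠ[𝓝 x] (fun z => (f z).re) := by
      filter_upwards [hball] with z hz
      exact (hPeq hz).symm
    have hQev : Q =ᶠ[𝓝 x] (fun z => (f z).im) := by
      filter_upwards [hball] with z hz
      exact (hQeq hz).symm
    have hPfd : fderiv ℝ P x = fderiv ℝ (fun z => (f z).re) x := hPev.fderiv_eq
    have hQfd : fderiv ℝ Q x = fderiv ℝ (fun z => (f z).im) x := hQev.fderiv_eq
    have hP1 : fderiv ℝ P x 1 = (fderiv ℝ f x 1).re := by rw [hPfd, hre_e]; rfl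
    have hPI : fderiv ℝ P x Complex.I = (fderiv ℝ f x Complex.I).re := by
      rw [hPfd, hre_e]; rfl
    have hQ1 : fderiv ℝ Q x 1 = (fderiv ℝ f x 1).im := by rw [hQfd, him_e]; rfl
    have hQI : fderiv ℝ Q x Complex.I = (fderiv ℝ f x Complex.I).im := by
      rw [hQfd, him_e]; rfl
    have hgr : gradient (fun z => (f z).re) x
        = ((fderiv ℝ f x 1).re : ℂ) + ((fderiv ℝ f x Complex.I).re : ℂ)*Complex.I := by
      rw [my_gradient]
      rw [show fderiv ℝ (fun z => (f z).re) x 1 = (fderiv ℝ f x 1).re by rw [hre_e]; rfl]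
      rw [show fderiv ℝ (fun z => (f z).re) x Complex.I = (fderiv ℝ f x Complex.I).re by
        rw [hre_e]; rfl]
    have hgi : gradient (fun z => (f z).im) x
        = ((fderiv ℝ f x 1).im : ℂ) + ((fderiv ℝ f x Complex.I).im : ℂ)*Complex.I := by
      rw [my_gradient]
      rw [show fderiv ℝ (fun z => (f z).im) x 1 = (fderiv ℝ f x 1).im by rw [him_e]; rfl]
      rw [show fderiv ℝ (fun z => (f z).im) x Complex.I = (fderiv ℝ f x Complex.I).im by
        rw [him_e]; rfl]
    have hwz : wZ f x = (fderiv ℝ f x 1 - Complex.I * fderiv ℝ f x Complex.I)/2 := rfl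
    have hwzb : H (wZ f x) = (fderiv ℝ f x 1 + Complex.I * fderiv ℝ f x Complex.I)/2 := by
      rw [← hbelx hx]; rfl
    constructor
    · rw [hQ1, hQI]
      have hstep_a : (1/2:ℝ) • gradient (fun z => (f z).re) x = Fmap H (wZ f x) := by
        rw [hgr]
        unfold Fmap
        rw [hwzb, hwz]
        exact my_alg_a1 _ _
      rw [hstep_a]
      unfold dualG
      rw [Function.leftInverse_invFun (my_Fmap_inj hH) (wZ f x)]
      unfold Fstar
      rw [hwzb, hwz]
      exact my_alg_c1 _ _
    · rw [hP1, hPI]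
      have hstep_a : (1/2:ℝ) • gradient (fun z => (f z).im) x = Fstar H (wZ f x) := by
        rw [hgi]
        unfold Fstar
        rw [hwzb, hwz]
        exact my_alg_a2 _ _
      rw [hstep_a]
      unfold dualGstar
      rw [Function.leftInverse_invFun (my_Fstar_inj hH) (wZ f x)]
      unfold Fmap
      rw [hwzb, hwz]
      exact my_alg_c2 _ _
  constructor
  · intro φ hφ hφc hsupp
    apply my_weak Q _ hQ φ hφ hφc hsupp _ (1/2)
    filter_upwards [hmain] with x hx hxball
    rw [(hx hxball).1, my_gradient φ x, my_inner_coords]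
    ring
  · intro φ hφ hφc hsupp
    apply my_weak P _ hP φ hφ hφc hsupp _ (-(1/2))
    filter_upwards [hmain] with x hx hxball
    rw [(hx hxball).2, my_gradient φ x, my_inner_coords]
    ring


end
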